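/- arXiv:1910.12226 — 2 statements merged into one kernel-verified Lean document; each statement's English description precedes it below -/
import Mathlib

section
/- For each n ∈ ℕ let A_n be a symmetric (0,2)-tensor field on P_n, and assume that for every n ∈ ℕ and each scalar patched Markov embedding G_n : P_n → P_{n+1}, the pullback of A_{n+1} by G_n equals A_n, and that A_2 satisfies condition (C1). Set λ := (1/2)·A_1(Z_1^1, Z_1^1)_{p_{1/2}}. Then for every u ∈ (0,1), A_1(Z_1^1, Z_1^1)_{p_u} = (λ/4)·(1/u² + 1/(1−u)²). -/
open Finset

noncomputable section

/-- `Psim n` is the space `P_n` of positive probability measures on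
`Ω_{n+1} = {1,…,n+1}`, viewed as a subset of `ℝ^{n+1}`. -/
def Psim (n : ℕ) : Set (Fin (n + 1) → ℝ) :=
  {p | (∀ i, p i ∈ Set.Ioo (0 : ℝ) 1) ∧ ∑ i, p i = 1}

/-- The tangent space of `P_n` (at any point): vectors in `ℝ^{n+1}` whose
coordinates sum to zero. -/
def Tang (n : ℕ) : Set (Fin (n + 1) → ℝ) :=
  {X | ∑ i, X i = 0}

/-- `B` is a symmetric bilinear form on `ℝ^{n+1}` (the value of a symmetric
`(0,2)`-tensor field at a point). -/
def IsSymmBilin {n : ℕ} (B : (Fin (n + 1) → ℝ) → (Fin (n + 1) → ℝ) → ℝ) : Prop :=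
  (∀ X Y, B X Y = B Y X) ∧
  (∀ (c : ℝ) (X X' Y : Fin (n + 1) → ℝ), B (c • X + X') Y = c * B X Y + B X' Y)

/-- `A` is a family of symmetric `(0,2)`-tensor fields `A_n` on `P_n`
(indices `n ≥ 1`, matching the paper's `ℕ = {1,2,…}`). -/
def SymmTF (A : (n : ℕ) → (Fin (n + 1) → ℝ) → (Fin (n + 1) → ℝ) → (Fin (n + 1) → ℝ) → ℝ) :
    Prop :=
  ∀ n : ℕ, 0 < n → ∀ p ∈ Psim n, IsSymmBilin (A n p)

/-- The scalar patched Markov embedding `G_n^{α,σ} : P_n → P_{n+1}`,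
`G_n^{α,σ}(p) = α ∑_{i ∈ Ω_{n+1}} p(i) δ_{σ(i)} + (1-α) δ_{σ(n+2)}`. -/
def sPatch (n : ℕ) (α : ℝ) (σ : Equiv.Perm (Fin (n + 2))) (p : Fin (n + 1) → ℝ) :
    Fin (n + 2) → ℝ := fun I =>
  α * ∑ i : Fin (n + 1), p i * (if σ i.castSucc = I then 1 else 0) +
    (1 - α) * (if σ (Fin.last (n + 1)) = I then 1 else 0)

/-- The differential of `G_n^{α,σ}`: `dG(X) = α ∑_i X^i δ_{σ(i)}`. -/
def sPatchD (n : ℕ) (α : ℝ) (σ : Equiv.Perm (Fin (n + 2))) (X : Fin (n + 1) → ℝ) :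
    Fin (n + 2) → ℝ := fun I =>
  α * ∑ i : Fin (n + 1), X i * (if σ i.castSucc = I then 1 else 0)

/-- A general patched Markov embedding `G_n : P_n → P_{n+1}` with weights `a_i`:
`G_n(p) = ∑_i p(i) (a_i δ_{σ(i)} + (1-a_i) δ_{σ(n+2)})`. -/
def patch (n : ℕ) (a : Fin (n + 1) → ℝ) (σ : Equiv.Perm (Fin (n + 2)))
    (p : Fin (n + 1) → ℝ) : Fin (n + 2) → ℝ := fun I =>
  ∑ i : Fin (n + 1), p i * (a i * (if σ i.castSucc = I then 1 else 0) +
    (1 - a i) * (if σ (Fin.last (n + 1)) = I then 1 else 0))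

/-- The differential of a patched Markov embedding. -/
def patchD (n : ℕ) (a : Fin (n + 1) → ℝ) (σ : Equiv.Perm (Fin (n + 2)))
    (X : Fin (n + 1) → ℝ) : Fin (n + 2) → ℝ := fun I =>
  ∑ i : Fin (n + 1), X i * (a i * (if σ i.castSucc = I then 1 else 0) +
    (1 - a i) * (if σ (Fin.last (n + 1)) = I then 1 else 0))

/-- Invariance of the family `{A_n}` under scalar patched Markov embeddings:
the pullback of `A_{n+1}` by each `G_n^{α,σ}` equals `A_n`. -/
def InvariantSP
    (A : (n : ℕ) → (Fin (n + 1) → ℝ) → (Fin (n + 1) → ℝ) → (Fin (n + 1) → ℝ) → ℝ) : Prop :=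
  ∀ n : ℕ, 0 < n → ∀ α ∈ Set.Ioo (0 : ℝ) 1, ∀ σ : Equiv.Perm (Fin (n + 2)),
    ∀ p ∈ Psim n, ∀ X ∈ Tang n, ∀ Y ∈ Tang n,
      A (n + 1) (sPatch n α σ p) (sPatchD n α σ X) (sPatchD n α σ Y) = A n p X Y

/-- The vector field `Z_i^n` on `P_n`, with (constant) coordinates
`e_i - (1/(n+1)) ∑_j e_j`. -/
def Zvec (n : ℕ) (i : Fin (n + 1)) : Fin (n + 1) → ℝ :=
  fun k => (if k = i then 1 else 0) - 1 / (n + 1)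

/-- The uniform probability measure `b_n ∈ P_n`. -/
def bunif (n : ℕ) : Fin (n + 1) → ℝ := fun _ => 1 / (n + 1)

/-- The point `p_u ∈ P_1`: `p_u(1) = u`, `p_u(2) = 1 - u`. -/
def pu (u : ℝ) : Fin 2 → ℝ := ![u, 1 - u]

/-- The tensor field `A_n^d(X,Y)_p = ∑_i X^i Y^i / p(i)²`. -/
def Ad (n : ℕ) (p X Y : Fin (n + 1) → ℝ) : ℝ := ∑ i, X i * Y i / (p i) ^ 2

/-- The tensor field `A_n^s(X,Y)_p = (∑_i X^i/p(i)) (∑_j Y^j/p(j))`. -/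
def As (n : ℕ) (p X Y : Fin (n + 1) → ℝ) : ℝ := (∑ i, X i / p i) * (∑ j, Y j / p j)

/-- The Fisher metric `g_n^F(X,Y)_p = ∑_i X^i Y^i / p(i)`. -/
def Fish (n : ℕ) (p X Y : Fin (n + 1) → ℝ) : ℝ := ∑ i, X i * Y i / p i

/-- The point `ψ_u^σ(α) = G_1^{α,σ}(p_u) ∈ P_2` (the indices `1,2,3` of `Ω_3`
are `0,1,2 : Fin 3`). -/
def psiPt (α u : ℝ) (σ : Equiv.Perm (Fin 3)) : Fin 3 → ℝ := sPatch 1 α σ (pu u)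

/-- `E^k ⊂ TP_2`: the line spanned by `Z_i^2 - Z_j^2 = e_i - e_j` where
`{i,j,k} = {0,1,2}`; equivalently, the sum-zero vectors vanishing at `k`. -/
def Esub (k : Fin 3) : Set (Fin 3 → ℝ) := {W | (∑ i, W i = 0) ∧ W k = 0}

/-- `u_α^{ij}` (formed with `σ = id`). -/
def uRatio (α u : ℝ) (i j : Fin 3) : ℝ :=
  psiPt α u (Equiv.refl (Fin 3)) i /
    (psiPt α u (Equiv.refl (Fin 3)) i + psiPt α u (Equiv.refl (Fin 3)) j)

/-- The image `dH^{ij}_q(Z_1^1) = ((q(i)+q(j))/2) (Z_i^2 - Z_j^2)` of `Z_1^1`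
under the differential of `H_q^{ij} : P_1 → P_2`. -/
def dHvec (q : Fin 3 → ℝ) (i j : Fin 3) : Fin 3 → ℝ :=
  ((q i + q j) / 2) • (Zvec 2 i - Zvec 2 j)

/-- Condition (C1) for `A_2`. -/
def CondC1 (A2 : (Fin 3 → ℝ) → (Fin 3 → ℝ) → (Fin 3 → ℝ) → ℝ) : Prop :=
  ∃ r : ℝ → ℝ, (∀ t : ℝ, 0 < t → 0 < r t) ∧ (∀ t : ℝ, 0 < t → r t * r (1 / t) = 1) ∧
    ∀ α ∈ Set.Ioo (0 : ℝ) 1, ∀ u ∈ Set.Ioo (0 : ℝ) 1, ∀ σ : Equiv.Perm (Fin 3),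
      ∀ W1 W2 W3 : Fin 3 → ℝ, W1 ∈ Esub (σ 0) → W2 ∈ Esub (σ 1) → W3 ∈ Esub (σ 2) →
        W3 = W1 + W2 →
        A2 (psiPt α u σ) W3 W1 = r (u / (1 - u)) * A2 (psiPt α u σ) W3 W2

/-- Condition (C2) for `A_1` and `A_2`: `A_1` is positive semidefinite and
degenerate at `b_1`, and the parallelism identity holds. -/
def CondC2 (A1 : (Fin 2 → ℝ) → (Fin 2 → ℝ) → (Fin 2 → ℝ) → ℝ)
    (A2 : (Fin 3 → ℝ) → (Fin 3 → ℝ) → (Fin 3 → ℝ) → ℝ) : Prop :=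
  (∀ p ∈ Psim 1, ∀ X ∈ Tang 1, 0 ≤ A1 p X X) ∧
  (∃ X ∈ Tang 1, X ≠ 0 ∧ ∀ Y ∈ Tang 1, A1 (bunif 1) X Y = 0) ∧
  (∀ α ∈ Set.Ioo (0 : ℝ) 1, ∀ u ∈ Set.Ioo (0 : ℝ) 1, ∀ σ : Equiv.Perm (Fin 3),
    ∀ i j k l : Fin 3, i ≠ j → k ≠ l →
      A2 (psiPt α u σ) (dHvec (psiPt α u σ) (σ i) (σ j)) (dHvec (psiPt α u σ) (σ k) (σ l)) =
        (Real.sign (2 * uRatio α u i j - 1) *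
            Real.sqrt (A1 (pu (uRatio α u i j)) (Zvec 1 0) (Zvec 1 0))) *
        (Real.sign (2 * uRatio α u k l - 1) *
            Real.sqrt (A1 (pu (uRatio α u k l)) (Zvec 1 0) (Zvec 1 0))))

/-- `H : P_m → P_n` (together with its linear differential `dH`) is a
composition of scalar patched Markov embeddings. -/
inductive IsSPMComp :
    (m n : ℕ) → ((Fin (m + 1) → ℝ) → (Fin (n + 1) → ℝ)) →
      ((Fin (m + 1) → ℝ) → (Fin (n + 1) → ℝ)) → Prop
  | refl (m : ℕ) : IsSPMComp m m id id
  | step {m n : ℕ} {H dH : (Fin (m + 1) → ℝ) → (Fin (n + 1) → ℝ)} (α : ℝ)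
      (hα : α ∈ Set.Ioo (0 : ℝ) 1) (σ : Equiv.Perm (Fin (n + 2)))
      (h : IsSPMComp m n H dH) :
      IsSPMComp m (n + 1) (fun p => sPatch n α σ (H p)) (fun X => sPatchD n α σ (dH X))

/-- `Q` is a Markov partition: each `Q i` is a probability measure on `Ω_{N+1}`
and the supports of the `Q i` are pairwise disjoint with union `Ω_{N+1}`. -/
def IsMarkovPartition {n N : ℕ} (Q : Fin (n + 1) → Fin (N + 1) → ℝ) : Prop :=
  (∀ i, (∀ I, 0 ≤ Q i I) ∧ ∑ I, Q i I = 1) ∧ (∀ I, ∃! i, Q i I ≠ 0)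

/-- The Markov embedding `F(p) = ∑_i p(i) Q_i` induced by `Q` (the same formula
gives its differential on tangent vectors). -/
def mEmb {n N : ℕ} (Q : Fin (n + 1) → Fin (N + 1) → ℝ) (p : Fin (n + 1) → ℝ) :
    Fin (N + 1) → ℝ := fun I => ∑ i, p i * Q i I

/-- `A_n^{λ,μ} = λ A_n^d + μ A_n^s`. -/
def Alm (n : ℕ) (lam mu : ℝ) (p X Y : Fin (n + 1) → ℝ) : ℝ :=
  lam * Ad n p X Y + mu * As n p X Y

/-! Write `f u = A_1(Z_1^1, Z_1^1)_{p_u}` and `e_{ij} = e_i - e_j`. Pulling back along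
`G_1^{α,σ}`, with `α = q_i + q_j` and `σ` sending `0, 1` to `i, j`, gives
`(q_i + q_j)² A_2(e_{ij}, e_{ij})_q = 4 f(q_i / (q_i + q_j))` at every `q ∈ P_2`; in particular
`f (1 - u) = f u`. Condition (C1) applied to `e_{01} = e_{21} + e_{02}` and to
`e_{02} = e_{12} + e_{01}` expresses both `A_2(e_{01}, e_{01})_q` and `A_2(e_{02}, e_{02})_q`
through `A_2(e_{01}, e_{02})_q`. Comparing them at `q ∝ (u, 1 - u, u)`, where
`r(q_0/q_2) = r 1 = 1`, gives `8 u² f u = (1 + r(u/(1-u))) f(1/2)`. Doing the same for `1 - u`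
and using `r t · r (1/t) = 1` forces `r(u/(1-u)) = u²/(1-u)²` unless `f(1/2) = 0`, and the
formula follows. -/

namespace IsSymmBilin

variable {n : ℕ} {B : (Fin (n + 1) → ℝ) → (Fin (n + 1) → ℝ) → ℝ}

theorem add_left (hB : IsSymmBilin B) (X X' Y : Fin (n + 1) → ℝ) :
    B (X + X') Y = B X Y + B X' Y := by
  simpa using hB.2 1 X X' Y

theorem add_right (hB : IsSymmBilin B) (X Y Y' : Fin (n + 1) → ℝ) :
    B X (Y + Y') = B X Y + B X Y' := by
  rw [hB.1, hB.add_left, hB.1 Y, hB.1 Y']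

theorem smul_left (hB : IsSymmBilin B) (c : ℝ) (X Y : Fin (n + 1) → ℝ) :
    B (c • X) Y = c * B X Y := by
  have h0 : B 0 Y = 0 := by simpa using hB.add_left 0 0 Y
  simpa [h0] using hB.2 c X 0 Y

theorem smul_smul (hB : IsSymmBilin B) (c : ℝ) (X Y : Fin (n + 1) → ℝ) :
    B (c • X) (c • Y) = c ^ 2 * B X Y := by
  rw [hB.smul_left, hB.1, hB.smul_left, hB.1 Y X]; ring

end IsSymmBilin

def edgeVec (i j : Fin 3) : Fin 3 → ℝ := Pi.single i 1 - Pi.single j 1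

theorem edgeVec_swap (i j : Fin 3) : edgeVec j i = (-1 : ℝ) • edgeVec i j := by
  simp [edgeVec]

theorem edgeVec_add (i j k : Fin 3) : edgeVec i j = edgeVec k j + edgeVec i k := by
  simp [edgeVec]

theorem edgeVec_mem_Esub {i j k : Fin 3} (hik : i ≠ k) (hjk : j ≠ k) : edgeVec i j ∈ Esub k :=
  ⟨by simp [edgeVec, Finset.sum_sub_distrib], by simp [edgeVec, hik.symm, hjk.symm]⟩

theorem pu_mem_Psim {u : ℝ} (hu : u ∈ Set.Ioo (0 : ℝ) 1) : pu u ∈ Psim 1 := by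
  obtain ⟨h0, h1⟩ := hu
  refine ⟨fun i => ?_, by simp [pu, Fin.sum_univ_two]⟩
  fin_cases i <;> constructor <;> simp [pu] <;> linarith

theorem Zvec_one_zero_mem_Tang : Zvec 1 0 ∈ Tang 1 := by
  norm_num [Zvec, Tang, Fin.sum_univ_two]

theorem sPatchD_Zvec (α : ℝ) (σ : Equiv.Perm (Fin 3)) :
    sPatchD 1 α σ (Zvec 1 0) = (α / 2) • edgeVec (σ 0) (σ 1) := by
  funext I
  obtain ⟨m, rfl⟩ := σ.surjective I
  fin_cases m <;> simp [sPatchD, Zvec, edgeVec, Fin.sum_univ_two] <;> ring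

theorem psiPt_apply_zero (α u : ℝ) (σ : Equiv.Perm (Fin 3)) : psiPt α u σ (σ 0) = α * u := by
  simp [psiPt, sPatch, pu]

theorem psiPt_apply_one (α u : ℝ) (σ : Equiv.Perm (Fin 3)) :
    psiPt α u σ (σ 1) = α * (1 - u) := by
  simp [psiPt, sPatch, pu]

theorem psiPt_apply_two (α u : ℝ) (σ : Equiv.Perm (Fin 3)) : psiPt α u σ (σ 2) = 1 - α := by
  simp [psiPt, sPatch, pu]

theorem sum_perm_of_mem_Psim {q : Fin 3 → ℝ} (hq : q ∈ Psim 2) (σ : Equiv.Perm (Fin 3)) :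
    q (σ 0) + q (σ 1) + q (σ 2) = 1 := by
  rw [← hq.2, ← Equiv.sum_comp σ, Fin.sum_univ_three]

theorem add_mem_Ioo_and_div_mem_Ioo_of_mem_Psim {q : Fin 3 → ℝ} (hq : q ∈ Psim 2)
    (σ : Equiv.Perm (Fin 3)) :
    q (σ 0) + q (σ 1) ∈ Set.Ioo (0 : ℝ) 1 ∧
      q (σ 0) / (q (σ 0) + q (σ 1)) ∈ Set.Ioo (0 : ℝ) 1 := by
  have h0 := (hq.1 (σ 0)).1
  have h1 := (hq.1 (σ 1)).1
  have h2 := (hq.1 (σ 2)).1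
  have hsum := sum_perm_of_mem_Psim hq σ
  exact ⟨⟨by positivity, by linarith⟩,
    ⟨by positivity, (div_lt_one (by positivity)).2 (by linarith)⟩⟩

theorem psiPt_eq_of_mem_Psim {q : Fin 3 → ℝ} (hq : q ∈ Psim 2) (σ : Equiv.Perm (Fin 3)) :
    psiPt (q (σ 0) + q (σ 1)) (q (σ 0) / (q (σ 0) + q (σ 1))) σ = q := by
  have hpos : q (σ 0) + q (σ 1) ≠ 0 := by linarith [(hq.1 (σ 0)).1, (hq.1 (σ 1)).1]
  have hsum := sum_perm_of_mem_Psim hq σ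
  funext I
  obtain ⟨m, rfl⟩ := σ.surjective I
  match m with
  | 0 => rw [psiPt_apply_zero]; field_simp
  | 1 => rw [psiPt_apply_one]; field_simp; ring
  | 2 => rw [psiPt_apply_two]; linarith

section Invariance

variable {A : (n : ℕ) → (Fin (n + 1) → ℝ) → (Fin (n + 1) → ℝ) → (Fin (n + 1) → ℝ) → ℝ}

theorem InvariantSP.sq_mul_apply_edgeVec (hsymm : SymmTF A) (hinv : InvariantSP A) {q : Fin 3 → ℝ}
    (hq : q ∈ Psim 2) (σ : Equiv.Perm (Fin 3)) :
    (q (σ 0) + q (σ 1)) ^ 2 * A 2 q (edgeVec (σ 0) (σ 1)) (edgeVec (σ 0) (σ 1)) =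
      4 * A 1 (pu (q (σ 0) / (q (σ 0) + q (σ 1)))) (Zvec 1 0) (Zvec 1 0) := by
  obtain ⟨hα, hu⟩ := add_mem_Ioo_and_div_mem_Ioo_of_mem_Psim hq σ
  have h := hinv 1 one_pos _ hα σ _ (pu_mem_Psim hu) _ Zvec_one_zero_mem_Tang _
    Zvec_one_zero_mem_Tang
  rw [sPatchD_Zvec, ← psiPt, psiPt_eq_of_mem_Psim hq, (hsymm 2 two_pos q hq).smul_smul] at h
  rw [← h]
  ring

theorem InvariantSP.apply_pu_one_sub (hsymm : SymmTF A) (hinv : InvariantSP A) {u : ℝ}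
    (hu : u ∈ Set.Ioo (0 : ℝ) 1) :
    A 1 (pu (1 - u)) (Zvec 1 0) (Zvec 1 0) = A 1 (pu u) (Zvec 1 0) (Zvec 1 0) := by
  obtain ⟨hu0, hu1⟩ := hu
  have hq : ![u / 2, (1 - u) / 2, 1 / 2] ∈ Psim 2 := by
    refine ⟨fun i => ?_, by simp [Fin.sum_univ_three]; ring⟩
    fin_cases i <;> constructor <;> simp <;> linarith
  have hid := hinv.sq_mul_apply_edgeVec hsymm hq (Equiv.refl _)
  have hswap := hinv.sq_mul_apply_edgeVec hsymm hq (Equiv.swap 0 1)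
  simp only [Equiv.refl_apply, Equiv.swap_apply_left, Equiv.swap_apply_right,
    Matrix.cons_val_zero, Matrix.cons_val_one] at hid hswap
  rw [edgeVec_swap, (hsymm 2 two_pos _ hq).smul_smul, add_comm] at hswap
  have hhalf : u / 2 + (1 - u) / 2 = 1 / 2 := by ring
  rw [hhalf, show u / 2 / (1 / 2) = u by ring] at hid
  rw [hhalf, show (1 - u) / 2 / (1 / 2) = 1 - u by ring] at hswap
  linarith

end Invariance

def IsC1Ratio (A2 : (Fin 3 → ℝ) → (Fin 3 → ℝ) → (Fin 3 → ℝ) → ℝ) (r : ℝ → ℝ) : Prop :=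
  ∀ α ∈ Set.Ioo (0 : ℝ) 1, ∀ u ∈ Set.Ioo (0 : ℝ) 1, ∀ σ : Equiv.Perm (Fin 3),
    ∀ W1 W2 W3 : Fin 3 → ℝ, W1 ∈ Esub (σ 0) → W2 ∈ Esub (σ 1) → W3 ∈ Esub (σ 2) →
      W3 = W1 + W2 →
      A2 (psiPt α u σ) W3 W1 = r (u / (1 - u)) * A2 (psiPt α u σ) W3 W2

namespace IsC1Ratio

variable {A2 : (Fin 3 → ℝ) → (Fin 3 → ℝ) → (Fin 3 → ℝ) → ℝ} {r : ℝ → ℝ} {q : Fin 3 → ℝ}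

theorem apply_edgeVec_eq (hr : IsC1Ratio A2 r) (hB : IsSymmBilin (A2 q)) (hq : q ∈ Psim 2)
    (σ : Equiv.Perm (Fin 3)) :
    A2 q (edgeVec (σ 0) (σ 1)) (edgeVec (σ 0) (σ 1)) =
      (1 + r (q (σ 0) / q (σ 1))) * A2 q (edgeVec (σ 0) (σ 1)) (edgeVec (σ 0) (σ 2)) := by
  obtain ⟨hα, hu⟩ := add_mem_Ioo_and_div_mem_Ioo_of_mem_Psim hq σ
  have hne : ∀ {i j : Fin 3}, i ≠ j → σ i ≠ σ j := fun h => σ.injective.ne h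
  have h := hr _ hα _ hu σ (edgeVec (σ 2) (σ 1)) (edgeVec (σ 0) (σ 2)) (edgeVec (σ 0) (σ 1))
    (edgeVec_mem_Esub (hne (by decide)) (hne (by decide)))
    (edgeVec_mem_Esub (hne (by decide)) (hne (by decide)))
    (edgeVec_mem_Esub (hne (by decide)) (hne (by decide))) (edgeVec_add _ _ (σ 2))
  have hratio : q (σ 0) / (q (σ 0) + q (σ 1)) / (1 - q (σ 0) / (q (σ 0) + q (σ 1))) =
      q (σ 0) / q (σ 1) := by
    rw [one_sub_div hα.1.ne', add_sub_cancel_left, div_div_div_cancel_right₀ hα.1.ne']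
  rw [psiPt_eq_of_mem_Psim hq, hratio] at h
  calc A2 q (edgeVec (σ 0) (σ 1)) (edgeVec (σ 0) (σ 1))
      = A2 q (edgeVec (σ 0) (σ 1)) (edgeVec (σ 2) (σ 1) + edgeVec (σ 0) (σ 2)) := by
        rw [← edgeVec_add]
    _ = _ := by rw [hB.add_right, h]; ring

theorem apply_edgeVec_mul_eq (hr : IsC1Ratio A2 r) (hB : IsSymmBilin (A2 q)) (hq : q ∈ Psim 2) :
    A2 q (edgeVec 0 1) (edgeVec 0 1) * (1 + r (q 0 / q 2)) =
      A2 q (edgeVec 0 2) (edgeVec 0 2) * (1 + r (q 0 / q 1)) := by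
  have hid := hr.apply_edgeVec_eq hB hq (Equiv.refl _)
  have hswap := hr.apply_edgeVec_eq hB hq (Equiv.swap 1 2)
  simp only [Equiv.refl_apply, Equiv.swap_apply_left, Equiv.swap_apply_right,
    Equiv.swap_apply_of_ne_of_ne (by decide : (0 : Fin 3) ≠ 1) (by decide : (0 : Fin 3) ≠ 2)]
    at hid hswap
  rw [hid, hswap, hB.1 (edgeVec 0 2)]
  ring

end IsC1Ratio

theorem InvariantSP.eight_mul_sq_mul_apply_pu
    {A : (n : ℕ) → (Fin (n + 1) → ℝ) → (Fin (n + 1) → ℝ) → (Fin (n + 1) → ℝ) → ℝ}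
    {r : ℝ → ℝ} (hsymm : SymmTF A) (hinv : InvariantSP A) (hr : IsC1Ratio (A 2) r)
    (hr1 : r 1 = 1) {u : ℝ} (hu : u ∈ Set.Ioo (0 : ℝ) 1) :
    8 * u ^ 2 * A 1 (pu u) (Zvec 1 0) (Zvec 1 0) =
      (1 + r (u / (1 - u))) * A 1 (pu (1 / 2)) (Zvec 1 0) (Zvec 1 0) := by
  obtain ⟨hu0, hu1⟩ := hu
  have h1u : (0 : ℝ) < 1 + u := by linarith
  have hq : ![u / (1 + u), (1 - u) / (1 + u), u / (1 + u)] ∈ Psim 2 := by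
    refine ⟨fun i => ?_, by simp [Fin.sum_univ_three]; field_simp; ring⟩
    fin_cases i <;> simp <;> constructor <;> first | positivity | (rw [div_lt_one h1u]; linarith)
  have hB := hsymm 2 two_pos _ hq
  have hid := hinv.sq_mul_apply_edgeVec hsymm hq (Equiv.refl _)
  have hswap := hinv.sq_mul_apply_edgeVec hsymm hq (Equiv.swap 1 2)
  have hrel := hr.apply_edgeVec_mul_eq hB hq
  simp only [Equiv.refl_apply, Equiv.swap_apply_left,
    Equiv.swap_apply_of_ne_of_ne (by decide : (0 : Fin 3) ≠ 1) (by decide : (0 : Fin 3) ≠ 2),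
    Matrix.cons_val_zero, Matrix.cons_val_one, Matrix.cons_val_two, Matrix.tail_cons,
    Matrix.head_cons] at hid hswap hrel
  rw [show u / (1 + u) + (1 - u) / (1 + u) = 1 / (1 + u) by ring,
    show u / (1 + u) / (1 / (1 + u)) = u by field_simp] at hid
  rw [show u / (1 + u) + u / (1 + u) = 2 * u / (1 + u) by ring,
    show u / (1 + u) / (2 * u / (1 + u)) = 1 / 2 by field_simp] at hswap
  rw [div_self (by positivity), div_div_div_cancel_right₀ h1u.ne', hr1] at hrel
  field_simp at hid hswap
  refine mul_left_cancel₀ (pow_ne_zero 2 h1u.ne') ?_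
  linear_combination -2 * u ^ 2 * hid + u ^ 2 * hrel + (1 + r (u / (1 - u))) / 4 * hswap

theorem eq_of_mul_sq_eq_of_mul_eq_one {f F a b u : ℝ} (hu0 : 0 < u) (hu1 : u < 1) (ha : 0 < a)
    (hab : a * b = 1) (h1 : 8 * u ^ 2 * f = (1 + a) * F)
    (h2 : 8 * (1 - u) ^ 2 * f = (1 + b) * F) :
    f = F / 8 * (1 / u ^ 2 + 1 / (1 - u) ^ 2) := by
  have hkey : F * (a * (1 - u) ^ 2 - u ^ 2) = 0 := by
    have h : (1 + a) * (F * (a * (1 - u) ^ 2 - u ^ 2)) = 0 := by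
      linear_combination -a * (1 - u) ^ 2 * h1 + a * u ^ 2 * h2 + u ^ 2 * F * hab
    exact (mul_eq_zero.1 h).resolve_left (by positivity)
  have hu' : 1 - u ≠ 0 := by linarith
  field_simp
  linear_combination (1 - u) ^ 2 * h1 + hkey

/-- Under invariance and condition (C1), with `λ = (1/2) A_1(Z_1^1,Z_1^1)_{p_{1/2}}`:
`A_1(Z_1^1,Z_1^1)_{p_u} = (λ/4)(1/u² + 1/(1-u)²)` for all `u ∈ (0,1)`. -/
theorem A1_formula_C1
    (A : (n : ℕ) → (Fin (n + 1) → ℝ) → (Fin (n + 1) → ℝ) → (Fin (n + 1) → ℝ) → ℝ)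
    (hsymm : SymmTF A) (hinv : InvariantSP A) (hC1 : CondC1 (A 2))
    (lam : ℝ) (hlam : lam = A 1 (pu (1 / 2)) (Zvec 1 0) (Zvec 1 0) / 2) :
    ∀ u ∈ Set.Ioo (0 : ℝ) 1,
      A 1 (pu u) (Zvec 1 0) (Zvec 1 0) =
        lam / 4 * (1 / u ^ 2 + 1 / (1 - u) ^ 2) := by
  obtain ⟨r, hrpos, hrinv, hr⟩ := hC1
  have hr1 : r 1 = 1 := by
    have h := hrinv 1 one_pos
    rw [div_one] at h
    nlinarith [hrpos 1 one_pos]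
  intro u hu
  have hu' : 1 - u ∈ Set.Ioo (0 : ℝ) 1 := ⟨by linarith [hu.2], by linarith [hu.1]⟩
  have ht : 0 < u / (1 - u) := div_pos hu.1 hu'.1
  have h1 := hinv.eight_mul_sq_mul_apply_pu hsymm hr hr1 hu
  have h2 := hinv.eight_mul_sq_mul_apply_pu hsymm hr hr1 hu'
  rw [hinv.apply_pu_one_sub hsymm hu, sub_sub_cancel, ← one_div_div] at h2
  rw [hlam, div_div, show (2 : ℝ) * 4 = 8 by norm_num]
  exact eq_of_mul_sq_eq_of_mul_eq_one hu.1 hu.2 (hrpos _ ht) (hrinv _ ht) h1 h2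
end
end

section
/- For each n ∈ ℕ let A_n be a symmetric (0,2)-tensor field on P_n, and assume that for every n ∈ ℕ and each scalar patched Markov embedding G_n : P_n → P_{n+1}, the pullback of A_{n+1} by G_n equals A_n, and that A_1 and A_2 satisfy condition (C2). Define M(u) := sgn(2u−1)·√(A_1(Z_1^1, Z_1^1)_{p_u}) for u ∈ (0,1), and μ := (16/9)·M(1/3)². Then M(u) = (√μ/2)·(1/(1−u) − 1/u) for every u ∈ (0,1). -/
open Finset

noncomputable section

/-! Extend `M` to the function `F(x, y) = 2 M(x / (x + y)) / (x + y)` of two positive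
variables, homogeneous of degree `-1`. At an interior point `q` of `P_2`, condition (C2) says
that the Gram matrix of `A_2(q)` on the vectors `Z_i - Z_j` is the rank-one matrix
`F(q_i, q_j) F(q_k, q_l)`. Since `(Z_0 - Z_1) + (Z_1 - Z_2) + (Z_2 - Z_0) = 0`, the coefficients
satisfy the cocycle identity `F(x, y) + F(y, z) + F(z, x) = 0`, first on the simplex and then, by
homogeneity, for all positive `x, y, z`. A homogeneous cocycle has the form `c (1/x - 1/y)`, so
`M(u) = (c/2) (1/u - 1/(1-u))`, and `M(1/3) ≤ 0` forces `c = -√μ`. -/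

theorem sum_eq_zero_of_apply_eq_mul {R V ι : Type*} [CommRing R] [NoZeroDivisors R]
    [AddCommMonoid V] [Module R V] [Fintype ι] (B : V →ₗ[R] V →ₗ[R] R) {v : ι → V}
    {c : ι → R} (hB : ∀ a b, B (v a) (v b) = c a * c b) (hv : ∑ a, v a = 0) :
    ∑ a, c a = 0 := by
  have hrow : ∀ a, c a * ∑ b, c b = 0 := fun a => by
    simp_rw [mul_sum, ← hB, ← map_sum, hv, map_zero]
  rw [← mul_self_eq_zero, sum_mul]
  exact sum_eq_zero fun a _ => hrow a

theorem eq_mul_inv_sub_inv_of_cocycle {F : ℝ → ℝ → ℝ}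
    (hhom : ∀ c x y, 0 < c → 0 < x → 0 < y → F (c * x) (c * y) = F x y / c)
    (hcoc : ∀ x y z, 0 < x → 0 < y → 0 < z → F x y + F y z + F z x = 0)
    {x y : ℝ} (hx : 0 < x) (hy : 0 < y) : F x y = 2 * F 1 2 * (x⁻¹ - y⁻¹) := by
  have hdiag : ∀ x, 0 < x → F x x = 0 := fun x hx => by linarith [hcoc x x x hx hx hx]
  have hF_split : ∀ x y, 0 < x → 0 < y → F x y = F 1 y - F 1 x := fun x y hx hy => by
    have := hcoc x y 1 hx hy one_pos
    have := hcoc y y 1 hy hy one_pos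
    linarith [hdiag y hy]
  have hF_one_mul : ∀ c y, 0 < c → 0 < y → F 1 (c * y) = F 1 c + F 1 y / c := fun c y hc hy => by
    have := hhom c 1 y hc one_pos hy
    rw [mul_one, hF_split c (c * y) hc (by positivity)] at this
    linarith
  have hF_one : ∀ c, 0 < c → F 1 c = 2 * F 1 2 * (1 - c⁻¹) := fun c hc => by
    have h := hF_one_mul c 2 hc two_pos
    rw [mul_comm, hF_one_mul 2 c two_pos hc] at h
    linear_combination -2 * h
  rw [hF_split x y hx hy, hF_one x hx, hF_one y hy]
  ring

namespace IsSymmBilin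

variable {n : ℕ} {B : (Fin (n + 1) → ℝ) → (Fin (n + 1) → ℝ) → ℝ}

def toLinearMap₂ (hB : IsSymmBilin B) :
    (Fin (n + 1) → ℝ) →ₗ[ℝ] (Fin (n + 1) → ℝ) →ₗ[ℝ] ℝ :=
  LinearMap.mk₂ ℝ B hB.add_left hB.smul_left
    (fun X Y Y' => by rw [hB.1, hB.add_left, hB.1 Y, hB.1 Y'])
    (fun c X Y => by rw [hB.1, hB.smul_left, hB.1 Y, smul_eq_mul])

@[simp]
theorem toLinearMap₂_apply (hB : IsSymmBilin B) (X Y : Fin (n + 1) → ℝ) :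
    hB.toLinearMap₂ X Y = B X Y := rfl

end IsSymmBilin

def homogExt (M : ℝ → ℝ) (x y : ℝ) : ℝ := 2 * M (x / (x + y)) / (x + y)

theorem homogExt_mul_mul (M : ℝ → ℝ) {c : ℝ} (hc : c ≠ 0) (x y : ℝ) :
    homogExt M (c * x) (c * y) = homogExt M x y / c := by
  rw [homogExt, homogExt, ← mul_add, mul_div_mul_left _ _ hc, div_div, mul_comm c]

theorem homogExt_self_one_sub (M : ℝ → ℝ) (u : ℝ) : homogExt M u (1 - u) = 2 * M u := by
  simp [homogExt]

theorem psiPt_refl (α u : ℝ) :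
    psiPt α u (Equiv.refl (Fin 3)) = ![α * u, α * (1 - u), 1 - α] := by
  funext I
  fin_cases I <;> simp [psiPt, sPatch, pu, Fin.sum_univ_two, Fin.last]

theorem exists_psiPt_refl_eq_of_mem_Psim {q : Fin 3 → ℝ} (hq : q ∈ Psim 2) :
    ∃ α ∈ Set.Ioo (0 : ℝ) 1, ∃ u ∈ Set.Ioo (0 : ℝ) 1, psiPt α u (Equiv.refl (Fin 3)) = q := by
  obtain ⟨hpos, hsum⟩ := hq
  rw [Fin.sum_univ_three] at hsum
  have h0 := (hpos 0).1
  have h1 := (hpos 1).1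
  have h2 := (hpos 2).1
  refine ⟨q 0 + q 1, ⟨by linarith, by linarith⟩, q 0 / (q 0 + q 1),
    ⟨by positivity, (div_lt_one (by linarith)).2 (by linarith)⟩, ?_⟩
  rw [psiPt_refl]
  funext I
  fin_cases I <;> simp only [Fin.reduceFinMk, Matrix.cons_val] <;> field_simp <;> linarith

section CondC2

variable {A : (n : ℕ) → (Fin (n + 1) → ℝ) → (Fin (n + 1) → ℝ) → (Fin (n + 1) → ℝ) → ℝ}
  {M : ℝ → ℝ}

theorem apply_sub_sub_eq_homogExt (hsymm : SymmTF A) (hC2 : CondC2 (A 1) (A 2))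
    (hM : ∀ u : ℝ, M u = Real.sign (2 * u - 1) * Real.sqrt (A 1 (pu u) (Zvec 1 0) (Zvec 1 0)))
    {q : Fin 3 → ℝ} (hq : q ∈ Psim 2) {i j k l : Fin 3} (hij : i ≠ j) (hkl : k ≠ l) :
    A 2 q (Zvec 2 i - Zvec 2 j) (Zvec 2 k - Zvec 2 l) =
      homogExt M (q i) (q j) * homogExt M (q k) (q l) := by
  obtain ⟨α, hα, u, hu, hψ⟩ := exists_psiPt_refl_eq_of_mem_Psim hq
  have h := hC2.2.2 α hα u hu (Equiv.refl (Fin 3)) i j k l hij hkl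
  simp only [Equiv.refl_apply, uRatio, ← hM, hψ, dHvec] at h
  have hB := hsymm 2 two_pos q hq
  rw [← hB.toLinearMap₂_apply] at h ⊢
  simp only [map_smul, LinearMap.smul_apply, smul_eq_mul] at h
  have hpos : ∀ a b : Fin 3, 0 < q a + q b := fun a b => add_pos (hq.1 a).1 (hq.1 b).1
  have := hpos i j
  have := hpos k l
  simp only [homogExt]
  field_simp
  linear_combination 4 * h

theorem homogExt_cocycle_of_mem_Psim (hsymm : SymmTF A) (hC2 : CondC2 (A 1) (A 2))
    (hM : ∀ u : ℝ, M u = Real.sign (2 * u - 1) * Real.sqrt (A 1 (pu u) (Zvec 1 0) (Zvec 1 0)))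
    {q : Fin 3 → ℝ} (hq : q ∈ Psim 2) :
    homogExt M (q 0) (q 1) + homogExt M (q 1) (q 2) + homogExt M (q 2) (q 0) = 0 := by
  have hne : ∀ a : Fin 3, a ≠ a + 1 := by decide
  have h := sum_eq_zero_of_apply_eq_mul (hsymm 2 two_pos q hq).toLinearMap₂
    (v := fun a => Zvec 2 a - Zvec 2 (a + 1)) (c := fun a => homogExt M (q a) (q (a + 1)))
    (fun a b => apply_sub_sub_eq_homogExt hsymm hC2 hM hq (hne a) (hne b))
    (by
      rw [Fin.sum_univ_three]
      show (Zvec 2 0 - Zvec 2 1) + (Zvec 2 1 - Zvec 2 2) + (Zvec 2 2 - Zvec 2 0) = 0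
      abel)
  simpa [Fin.sum_univ_three] using h

theorem homogExt_cocycle (hsymm : SymmTF A) (hC2 : CondC2 (A 1) (A 2))
    (hM : ∀ u : ℝ, M u = Real.sign (2 * u - 1) * Real.sqrt (A 1 (pu u) (Zvec 1 0) (Zvec 1 0)))
    {x y z : ℝ} (hx : 0 < x) (hy : 0 < y) (hz : 0 < z) :
    homogExt M x y + homogExt M y z + homogExt M z x = 0 := by
  set s := x + y + z
  have hs : 0 < s := by positivity
  have hq : ![x / s, y / s, z / s] ∈ Psim 2 := by
    refine ⟨fun i => ?_, ?_⟩
    · fin_cases i <;> simp only [Fin.reduceFinMk, Matrix.cons_val] <;>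
        exact ⟨by positivity, by rw [div_lt_one hs]; linarith⟩
    · rw [Fin.sum_univ_three]
      show x / s + y / s + z / s = 1
      rw [← add_div, ← add_div, div_self hs.ne']
  have hrescale : ∀ a b, homogExt M a b = homogExt M (a / s) (b / s) / s := fun a b => by
    rw [← homogExt_mul_mul M hs.ne', mul_div_cancel₀ _ hs.ne', mul_div_cancel₀ _ hs.ne']
  have h := homogExt_cocycle_of_mem_Psim hsymm hC2 hM hq
  rw [hrescale x y, hrescale y z, hrescale z x, ← add_div, ← add_div]
  exact div_eq_zero_iff.2 (Or.inl h)

end CondC2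

theorem M_formula_C2_general
    (A : (n : ℕ) → (Fin (n + 1) → ℝ) → (Fin (n + 1) → ℝ) → (Fin (n + 1) → ℝ) → ℝ)
    (hsymm : SymmTF A) (hC2 : CondC2 (A 1) (A 2))
    (M : ℝ → ℝ)
    (hM : ∀ u : ℝ, M u = Real.sign (2 * u - 1) *
      Real.sqrt (A 1 (pu u) (Zvec 1 0) (Zvec 1 0)))
    (mu : ℝ) (hmu : mu = (16 / 9) * (M (1 / 3)) ^ 2) :
    ∀ u ∈ Set.Ioo (0 : ℝ) 1,
      M u = (Real.sqrt mu / 2) * (1 / (1 - u) - 1 / u) := by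
  set k := homogExt M 1 2
  have hMk : ∀ v ∈ Set.Ioo (0 : ℝ) 1, M v = k * (v⁻¹ - (1 - v)⁻¹) := fun v hv => by
    have h := eq_mul_inv_sub_inv_of_cocycle (fun c x y hc _ _ => homogExt_mul_mul M hc.ne' x y)
      (fun x y z hx hy hz => homogExt_cocycle hsymm hC2 hM hx hy hz) hv.1 (sub_pos.2 hv.2)
    rw [homogExt_self_one_sub] at h
    linarith
  have hM13 : M (1 / 3) = 3 / 2 * k := by rw [hMk _ (by norm_num)]; ring
  have hk : k ≤ 0 := by
    have hsign : M (1 / 3) ≤ 0 := by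
      rw [hM, Real.sign_of_neg (by norm_num), neg_one_mul, neg_nonpos]
      exact Real.sqrt_nonneg _
    linarith
  have hsqrt : Real.sqrt mu = -2 * k := by
    rw [hmu, hM13, show 16 / 9 * (3 / 2 * k) ^ 2 = (-2 * k) ^ 2 by ring,
      Real.sqrt_sq (by linarith)]
  intro u hu
  rw [hMk u hu, hsqrt]
  ring

/-- Under invariance and condition (C2), with
`M(u) = sgn(2u-1) √(A_1(Z_1^1,Z_1^1)_{p_u})` and `μ = (16/9) M(1/3)²`:
`M(u) = (√μ/2)(1/(1-u) - 1/u)` for all `u ∈ (0,1)`. -/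
theorem M_formula_C2
    (A : (n : ℕ) → (Fin (n + 1) → ℝ) → (Fin (n + 1) → ℝ) → (Fin (n + 1) → ℝ) → ℝ)
    (hsymm : SymmTF A) (hinv : InvariantSP A) (hC2 : CondC2 (A 1) (A 2))
    (M : ℝ → ℝ)
    (hM : ∀ u : ℝ, M u = Real.sign (2 * u - 1) *
      Real.sqrt (A 1 (pu u) (Zvec 1 0) (Zvec 1 0)))
    (mu : ℝ) (hmu : mu = (16 / 9) * (M (1 / 3)) ^ 2) :
    ∀ u ∈ Set.Ioo (0 : ℝ) 1,
      M u = (Real.sqrt mu / 2) * (1 / (1 - u) - 1 / u) :=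
  M_formula_C2_general A hsymm hC2 M hM mu hmu
end
end
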